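/- arXiv:2505.07125 — 3 statements merged into one kernel-verified Lean document; each statement's English description precedes it below -/
import Mathlib

section
/- If L is a (right) Leibniz algebra such that every element of L is a linear combination of squares (i.e., Leib(L) = L), then L has zero multiplication: xy = 0 for all x, y ∈ L. -/
/-- If `L` is a (right) Leibniz algebra in which every element is a linear combination
of squares (`Leib(L) = L`), then `L` has zero multiplication. -/
theorem leib_eq_top_imp_zero_mul {F L : Type*} [Field F] [AddCommGroup L] [Module F L]
    (mul : L →ₗ[F] L →ₗ[F] L)
    (leibniz : ∀ x y z : L, mul (mul x y) z = mul (mul x z) y + mul x (mul y z))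
    (h : Submodule.span F {s : L | ∃ x : L, s = mul x x} = ⊤) :
    ∀ x y : L, mul x y = 0 := by
  intro x y
  have key : ∀ z : L, mul x (mul z z) = 0 := by
    intro z
    have hz := (leibniz x z z).symm
    exact (add_eq_left).mp hz
  have hle : Submodule.span F {s : L | ∃ z : L, s = mul z z} ≤ LinearMap.ker (mul x) :=
    Submodule.span_le.mpr (by rintro s ⟨z, rfl⟩; exact key z)
  rw [h] at hle
  exact LinearMap.mem_ker.mp (hle Submodule.mem_top)
end

section
/- Let L₃ be the 3-dimensional complex algebra with basis e₁, e₂, e₃ and nonzero products e₂e₃ = −e₂, e₃e₂ = e₂, e₃e₃ = e₁. A linear map g : L₃ → L₃ is an algebra automorphism if and only if its matrix with respect to the basis (e₁,e₂,e₃) has the form with rows (1, 0, α₃), (0, α₅, α₆), (0, 0, 1) for some α₃, α₅, α₆ ∈ ℂ with α₅ ≠ 0. -/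
/-!
Write `eᵢ = Pi.single (i - 1) 1`, so that `e₂e₂ = 0`, `e₂e₃ = -e₂` and `e₃e₃ = e₁`, and note
that `v * v = (v₃², 0, 0)`. For an injective multiplicative `g`, the vector `b = g e₂` is
nonzero with `b * b = 0`, so `b₃ = 0`; then `b * g e₃ = -b` gives `b₁ = 0`, hence `b₂ ≠ 0`
and `(g e₃)₃ = 1`, and finally `g e₁ = g e₃ * g e₃ = e₁`. Conversely, the linear map with such a matrix is
multiplicative by direct computation and injective since `α₅ ≠ 0`.
-/

def mulL3 (a b : Fin 3 → ℂ) : Fin 3 → ℂ :=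
  ![a 2 * b 2, a 2 * b 1 - a 1 * b 2, 0]

section NormalForm

variable (α₃ α₅ α₆ : ℂ)

def autL3 : (Fin 3 → ℂ) →ₗ[ℂ] (Fin 3 → ℂ) :=
  Matrix.toLin' !![1, 0, α₃; 0, α₅, α₆; 0, 0, 1]

lemma autL3_apply (x : Fin 3 → ℂ) :
    autL3 α₃ α₅ α₆ x = ![x 0 + α₃ * x 2, α₅ * x 1 + α₆ * x 2, x 2] := by
  ext i
  fin_cases i <;> simp [autL3, Matrix.mulVec, dotProduct, Fin.sum_univ_three]

lemma autL3_mulL3 (x y : Fin 3 → ℂ) :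
    autL3 α₃ α₅ α₆ (mulL3 x y) = mulL3 (autL3 α₃ α₅ α₆ x) (autL3 α₃ α₅ α₆ y) := by
  simp only [autL3_apply]
  ext i
  fin_cases i <;> simp [mulL3]
  ring

variable {α₃ α₅ α₆}

lemma autL3_injective (h₅ : α₅ ≠ 0) : Function.Injective (autL3 α₃ α₅ α₆) := by
  rw [← LinearMap.ker_eq_bot, LinearMap.ker_eq_bot']
  intro x hx
  have h := congrFun (autL3_apply α₃ α₅ α₆ x ▸ hx)
  have h2 : x 2 = 0 := by simpa using h 2
  have h0 : x 0 = 0 := by simpa [h2] using h 0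
  have h1 : x 1 = 0 := by simpa [h2, h₅] using h 1
  ext i
  fin_cases i <;> assumption

lemma autL3_bijective (h₅ : α₅ ≠ 0) : Function.Bijective (autL3 α₃ α₅ α₆) :=
  ⟨autL3_injective h₅, LinearMap.injective_iff_surjective.mp (autL3_injective h₅)⟩

end NormalForm

lemma mulL3_self (v : Fin 3 → ℂ) : mulL3 v v = ![v 2 ^ 2, 0, 0] := by
  ext i
  fin_cases i <;> simp [mulL3, sq, mul_comm]

lemma mulL3_single_one_single_one : mulL3 (Pi.single 1 1) (Pi.single 1 1) = 0 := by
  ext i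
  fin_cases i <;> simp [mulL3]

lemma mulL3_single_one_single_two :
    mulL3 (Pi.single 1 1) (Pi.single 2 1) = -Pi.single 1 1 := by
  ext i
  fin_cases i <;> simp [mulL3]

lemma mulL3_single_two_single_two :
    mulL3 (Pi.single 2 1) (Pi.single 2 1) = Pi.single 0 1 := by
  ext i
  fin_cases i <;> simp [mulL3]

lemma exists_toMatrix'_eq_of_injective_of_map_mulL3 {g : (Fin 3 → ℂ) →ₗ[ℂ] (Fin 3 → ℂ)}
    (hinj : Function.Injective g) (hmul : ∀ x y, g (mulL3 x y) = mulL3 (g x) (g y)) :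
    ∃ α₃ α₅ α₆ : ℂ, α₅ ≠ 0 ∧ LinearMap.toMatrix' g = !![1, 0, α₃; 0, α₅, α₆; 0, 0, 1] := by
  set a := g (Pi.single 0 1)
  set b := g (Pi.single 1 1)
  set c := g (Pi.single 2 1)
  have hbb : mulL3 b b = 0 := by rw [← hmul, mulL3_single_one_single_one, map_zero]
  have hbc : mulL3 b c = -b := by rw [← hmul, mulL3_single_one_single_two, map_neg]
  have hcc : mulL3 c c = a := by rw [← hmul, mulL3_single_two_single_two]
  have hb_ne : b ≠ 0 := (map_ne_zero_iff g hinj).mpr (by simp)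
  have hb2 : b 2 = 0 := by simpa [mulL3_self] using congrFun hbb 0
  have hb0 : b 0 = 0 := by simpa [mulL3, hb2] using congrFun hbc 0
  have hb1 : b 1 ≠ 0 := by
    intro hb1
    exact hb_ne (by ext i; fin_cases i <;> assumption)
  have hc2 : c 2 = 1 := by simpa [mulL3, hb2, hb1] using congrFun hbc 1
  have ha : a = ![1, 0, 0] := by rw [← hcc, mulL3_self, hc2]; simp
  have hcols : ∀ j, g (Pi.single j 1) = ![a, b, c] j := by
    intro j
    fin_cases j <;> rfl
  refine ⟨c 0, b 1, c 1, hb1, ?_⟩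
  ext i j
  rw [LinearMap.toMatrix'_apply, hcols]
  fin_cases i <;> fin_cases j <;> simp [ha, hb0, hb2, hc2]

/-- A linear map `g : L₃ → L₃` is an algebra automorphism iff its matrix with
respect to the basis `(e₁,e₂,e₃)` has rows `(1,0,α₃), (0,α₅,α₆), (0,0,1)`
for some `α₃, α₅, α₆ ∈ ℂ` with `α₅ ≠ 0`. -/
theorem L3_automorphisms (g : (Fin 3 → ℂ) →ₗ[ℂ] (Fin 3 → ℂ)) :
    (Function.Bijective g ∧ ∀ x y : Fin 3 → ℂ, g (mulL3 x y) = mulL3 (g x) (g y)) ↔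
    ∃ α₃ α₅ α₆ : ℂ, α₅ ≠ 0 ∧
      LinearMap.toMatrix' g = !![1, 0, α₃; 0, α₅, α₆; 0, 0, 1] := by
  constructor
  · rintro ⟨hbij, hmul⟩
    exact exists_toMatrix'_eq_of_injective_of_map_mulL3 hbij.injective hmul
  · rintro ⟨α₃, α₅, α₆, h₅, hM⟩
    obtain rfl : g = autL3 α₃ α₅ α₆ := by
      rw [autL3, ← hM, Matrix.toLin'_toMatrix']
    exact ⟨autL3_bijective h₅, autL3_mulL3 α₃ α₅ α₆⟩
end

section
/- Let V be a 2-dimensional vector space over ℂ with basis e₁, e₂, and let G ⊆ GL₂(ℂ) be the group of unipotent upper-triangular matrices [[1, α],[0,1]], α ∈ ℂ, acting diagonally on Vᵐ. Then the algebra of G-invariant polynomials ℂ[x_{r1}, x_{r2} : 1 ≤ r ≤ m]^G is generated by 1, the coordinates x_{12}, …, x_{m2}, and the determinants x_{r1}x_{s2} − x_{r2}x_{s1} for 1 ≤ r < s ≤ m. -/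
/-!
The shear `x_{r1} ↦ x_{r1} + α x_{r2}` is the flow of the derivation `D = ∑ x_{r2} ∂/∂x_{r1}`, so
over an infinite field invariance amounts to `D f = 0`. The kernel of `D` is spanned by
bihomogeneous polynomials, and for `f` of bidegree `(a, b)` with `D f = 0` Capelli's identity reads
`∑_{r,s} [rs] Ω_{rs} f = 2a(b+1) f`, with `[rs]` the `2 × 2` minors and `Ω_{rs}` Cayley's
Ω-process. As `Ω_{rs}` commutes with `D` and lowers both degrees by one, induction on `a` reduces
everything to `a = 0`, where `f` is a polynomial in the `x_{r2}` alone.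
-/

namespace MvPolynomial

theorem pderiv_pderiv_comm {σ R : Type*} [CommSemiring R] (i j : σ) (f : MvPolynomial σ R) :
    pderiv i (pderiv j f) = pderiv j (pderiv i f) := by
  induction f using MvPolynomial.induction_on with
  | C c => simp
  | add p q hp hq => simp [hp, hq]
  | mul_X p k hp =>
    have hXX : ∀ a b : σ, pderiv a (pderiv b (X k : MvPolynomial σ R)) = 0 := by
      classical
      intro a b
      simp [pderiv_X, Pi.single_apply, apply_ite]
    simp only [pderiv_mul, map_add, hXX, mul_zero, add_zero, hp]
    ring

section Pairs

open Finset

variable {R : Type*} [CommRing R] {ι : Type*}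

noncomputable def minor (r s : ι) : MvPolynomial (ι × Fin 2) R :=
  X (r, 0) * X (s, 1) - X (r, 1) * X (s, 0)

def pairInvariantGenerators [LT ι] : Set (MvPolynomial (ι × Fin 2) R) :=
  Set.range (fun r ↦ X (r, 1)) ∪ {q | ∃ r s : ι, r < s ∧ q = minor r s}

theorem minor_mem_adjoin_pairInvariantGenerators [LinearOrder ι] (r s : ι) :
    (minor r s : MvPolynomial (ι × Fin 2) R) ∈ Algebra.adjoin R pairInvariantGenerators := by
  rcases lt_trichotomy r s with hrs | rfl | hsr
  · exact Algebra.subset_adjoin (Or.inr ⟨r, s, hrs, rfl⟩)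
  · rw [show (minor r r : MvPolynomial (ι × Fin 2) R) = 0 by simp only [minor]; ring]
    exact zero_mem _
  · rw [show (minor r s : MvPolynomial (ι × Fin 2) R) = -minor s r by simp only [minor]; ring]
    exact neg_mem (Algebra.subset_adjoin (Or.inr ⟨s, r, hsr, rfl⟩))

noncomputable def cayleyOmega (r s : ι) (f : MvPolynomial (ι × Fin 2) R) :
    MvPolynomial (ι × Fin 2) R :=
  pderiv (r, 0) (pderiv (s, 1) f) - pderiv (r, 1) (pderiv (s, 0) f)

-- `ℤ`-valued, so that every partial derivative shifts the degree without truncation.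
def bidegree : ι × Fin 2 → Fin 2 → ℤ := fun p ↦ Pi.single p.2 1

theorem IsWeightedHomogeneous.cayleyOmega {f : MvPolynomial (ι × Fin 2) R} {n : Fin 2 → ℤ}
    (h : f.IsWeightedHomogeneous bidegree n) (r s : ι) :
    (cayleyOmega r s f).IsWeightedHomogeneous bidegree (n - Pi.single 0 1 - Pi.single 1 1) := by
  refine .sub ?_ ?_
  · rw [sub_right_comm]
    exact (h.pderiv (sub_add_cancel _ _)).pderiv (sub_add_cancel _ _)
  · exact (h.pderiv (sub_add_cancel _ _)).pderiv (sub_add_cancel _ _)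

variable [Fintype ι]

-- `polarization 0 1` is the infinitesimal shear, `polarization i i` the Euler operator of column `i`.
noncomputable def polarization (i j : Fin 2) :
    Derivation R (MvPolynomial (ι × Fin 2) R) (MvPolynomial (ι × Fin 2) R) :=
  ∑ r, (X (r, j) : MvPolynomial (ι × Fin 2) R) • pderiv (r, i)

theorem polarization_apply (i j : Fin 2) (f : MvPolynomial (ι × Fin 2) R) :
    polarization i j f = ∑ r, X (r, j) * pderiv (r, i) f := by
  simp only [polarization, ← Derivation.coeFnAddMonoidHom_apply, map_sum, Finset.sum_apply]
  simp [Derivation.coeFnAddMonoidHom_apply, Derivation.smul_apply]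

theorem polarization_X (i j : Fin 2) (r : ι) (k : Fin 2) :
    polarization i j (X (r, k) : MvPolynomial (ι × Fin 2) R) = if k = i then X (r, j) else 0 := by
  classical
  simp [polarization_apply, pderiv_X, Pi.single_apply, ite_and]

theorem pderiv_polarization (s : ι) (k i j : Fin 2) (f : MvPolynomial (ι × Fin 2) R) :
    pderiv (s, k) (polarization i j f) =
      polarization i j (pderiv (s, k) f) + if k = j then pderiv (s, i) f else 0 := by
  classical
  simp only [polarization_apply, map_sum, pderiv_mul, pderiv_X, Pi.single_apply, Prod.ext_iff,
    sum_add_distrib, pderiv_pderiv_comm (s, k)]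
  rw [add_comm]
  congr 1
  simp [ite_and, eq_comm]

theorem polarization_cayleyOmega (r s : ι) (f : MvPolynomial (ι × Fin 2) R) :
    polarization 0 1 (cayleyOmega r s f) = cayleyOmega r s (polarization 0 1 f) := by
  simp only [cayleyOmega, map_sub, map_add, pderiv_polarization]
  simp

-- Capelli's identity.
theorem sum_minor_mul_cayleyOmega (f : MvPolynomial (ι × Fin 2) R) :
    ∑ r, ∑ s, minor r s * cayleyOmega r s f =
      2 • (polarization 0 0 (polarization 1 1 f + f) - polarization 1 0 (polarization 0 1 f)) := by
  set A : ι → ι → MvPolynomial (ι × Fin 2) R :=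
    fun r s ↦ X (r, 0) * X (s, 1) * pderiv (r, 0) (pderiv (s, 1) f)
  set B : ι → ι → MvPolynomial (ι × Fin 2) R :=
    fun r s ↦ X (r, 0) * X (s, 1) * pderiv (r, 1) (pderiv (s, 0) f)
  have hterm : ∀ r s, minor r s * cayleyOmega r s f = A r s - B r s - B s r + A s r := by
    intro r s
    simp only [A, B, minor, cayleyOmega]
    rw [pderiv_pderiv_comm (s, 1) (r, 0), pderiv_pderiv_comm (s, 0) (r, 1)]
    ring
  have hA : ∑ r, ∑ s, A r s = polarization 0 0 (polarization 1 1 f) := by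
    simp only [A, polarization_apply 0 0, pderiv_polarization]
    simp only [Fin.isValue, mul_assoc, polarization_apply, zero_ne_one, ↓reduceIte, add_zero,
      mul_sum]
    exact sum_congr rfl fun r _ ↦ sum_congr rfl fun s _ ↦ by rw [pderiv_pderiv_comm]
  have hB : ∑ r, ∑ s, B r s = polarization 1 0 (polarization 0 1 f) - polarization 0 0 f := by
    simp only [B, polarization_apply 1 0, pderiv_polarization]
    simp only [Fin.isValue, mul_assoc, polarization_apply, ↓reduceIte, mul_add, mul_sum,
      sum_add_distrib, add_sub_cancel_right]
    exact sum_congr rfl fun r _ ↦ sum_congr rfl fun s _ ↦ by rw [pderiv_pderiv_comm]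
  calc ∑ r, ∑ s, minor r s * cayleyOmega r s f
      = ∑ r, ∑ s, (A r s - B r s - B s r + A s r) := by simp only [hterm]
    _ = 2 • (∑ r, ∑ s, A r s - ∑ r, ∑ s, B r s) := by
      simp only [sum_add_distrib, sum_sub_distrib]
      rw [sum_comm (f := fun r s ↦ B s r), sum_comm (f := fun r s ↦ A s r)]
      abel
    _ = _ := by rw [hA, hB, map_add]; abel

theorem weight_bidegree_apply (d : ι × Fin 2 →₀ ℕ) (i : Fin 2) :
    Finsupp.weight bidegree d i = ∑ r, (d (r, i) : ℤ) := by
  simp [Finsupp.weight_eq_sum, bidegree, Fintype.sum_prod_type, Pi.single_apply]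

variable {f : MvPolynomial (ι × Fin 2) R} {n : Fin 2 → ℤ}

theorem IsWeightedHomogeneous.polarization_self (h : f.IsWeightedHomogeneous bidegree n)
    (i : Fin 2) : polarization i i f = n i • f := by
  induction h using IsWeightedHomogeneous.induction_on with
  | zero => simp
  | add p q _ _ hp hq => rw [map_add, hp, hq, smul_add]
  | monomial d c hd =>
    simp only [polarization_apply, X_mul_pderiv_monomial, ← sum_smul, ← hd, weight_bidegree_apply]
    norm_cast

theorem IsWeightedHomogeneous.polarization (h : f.IsWeightedHomogeneous bidegree n)
    (i j : Fin 2) :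
    (polarization i j f).IsWeightedHomogeneous bidegree (n - Pi.single i 1 + Pi.single j 1) := by
  rw [polarization_apply, add_comm]
  exact IsWeightedHomogeneous.sum _ _ _ fun r _ ↦
    (isWeightedHomogeneous_X R bidegree (r, j)).mul (h.pderiv (sub_add_cancel _ _))

theorem IsWeightedHomogeneous.bidegree_nonneg (h : f.IsWeightedHomogeneous bidegree n)
    (hf : f ≠ 0) (i : Fin 2) : 0 ≤ n i := by
  obtain ⟨d, hd⟩ := exists_coeff_ne_zero hf
  rw [← h hd, weight_bidegree_apply]
  positivity

theorem IsWeightedHomogeneous.mem_adjoin_X_of_bidegree_zero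
    (h : f.IsWeightedHomogeneous bidegree n) (h0 : n 0 = 0) :
    f ∈ Algebra.adjoin R (Set.range fun r ↦ (X (r, 1) : MvPolynomial (ι × Fin 2) R)) := by
  have hsupp : f ∈ supported R {p | p.2 = 1} := by
    rw [mem_supported]
    intro ⟨r, k⟩ hp
    obtain ⟨d, hd, hrk⟩ := (mem_vars_iff_mem_support _).mp hp
    change k = 1
    by_contra hk
    obtain rfl : k = 0 := by omega
    have hsum : ∑ r, (d (r, 0) : ℤ) = 0 := by
      rw [← weight_bidegree_apply, h (mem_support_iff.mp hd), h0]
    have := (sum_eq_zero_iff_of_nonneg fun _ _ ↦ by positivity).mp hsum r (mem_univ r)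
    simp_all
  refine Algebra.adjoin_mono ?_ hsupp
  rintro _ ⟨⟨r, k⟩, hk, rfl⟩
  exact ⟨r, by rw [show k = 1 from hk]⟩

theorem weightedHomogeneousComponent_polarization (i j : Fin 2) (n : Fin 2 → ℤ)
    (f : MvPolynomial (ι × Fin 2) R) :
    weightedHomogeneousComponent bidegree (n - Pi.single i 1 + Pi.single j 1) (polarization i j f) =
      polarization i j (weightedHomogeneousComponent bidegree n f) := by
  classical
  induction f using MvPolynomial.induction_on' with
  | monomial d c =>
    have h := isWeightedHomogeneous_monomial bidegree d c rfl
    rw [weightedHomogeneousComponent_of_mem h,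
      weightedHomogeneousComponent_of_mem (h.polarization i j)]
    simp only [add_left_inj, sub_left_inj]
    split_ifs <;> simp
  | add p q hp hq => simp only [map_add, hp, hq]

end Pairs

section CharZero

variable {K : Type*} [Field K] [CharZero K] {ι : Type*} [Fintype ι] [LinearOrder ι]
  {f : MvPolynomial (ι × Fin 2) K}

theorem mem_adjoin_of_isWeightedHomogeneous_of_polarization_eq_zero {n : Fin 2 → ℤ}
    (h : f.IsWeightedHomogeneous bidegree n) (hf : polarization 0 1 f = 0) :
    f ∈ Algebra.adjoin K pairInvariantGenerators := by
  rcases eq_or_ne f 0 with rfl | hf0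
  · exact zero_mem _
  obtain ⟨a, ha⟩ := Int.eq_ofNat_of_zero_le (h.bidegree_nonneg hf0 0)
  induction a generalizing f n with
  | zero =>
    exact Algebra.adjoin_mono Set.subset_union_left (h.mem_adjoin_X_of_bidegree_zero ha)
  | succ a ih =>
    have hΩ : ∀ r s, cayleyOmega r s f ∈ Algebra.adjoin K pairInvariantGenerators := by
      intro r s
      rcases eq_or_ne (cayleyOmega r s f) 0 with h0 | h0
      · rw [h0]
        exact zero_mem _
      refine ih (h.cayleyOmega r s) ?_ h0 ?_
      · rw [polarization_cayleyOmega, hf]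
        simp [cayleyOmega]
      · simp [ha]
    have hcapelli : ∑ r, ∑ s, minor r s * cayleyOmega r s f = (2 * n 0 * (n 1 + 1)) • f := by
      rw [sum_minor_mul_cayleyOmega, hf, map_zero, sub_zero, h.polarization_self 1,
        ← add_one_zsmul, map_zsmul, h.polarization_self 0]
      module
    have hc : ((2 * n 0 * (n 1 + 1) : ℤ) : K) ≠ 0 := by
      have := h.bidegree_nonneg hf0 1
      rw [ha]
      norm_cast
      positivity
    have hmem : (2 * n 0 * (n 1 + 1)) • f ∈ Algebra.adjoin K pairInvariantGenerators :=
      hcapelli ▸ sum_mem fun r _ ↦ sum_mem fun s _ ↦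
        mul_mem (minor_mem_adjoin_pairInvariantGenerators r s) (hΩ r s)
    rw [← Int.cast_smul_eq_zsmul K] at hmem
    exact (Submodule.smul_mem_iff
      (Subalgebra.toSubmodule (Algebra.adjoin K pairInvariantGenerators)) hc).mp hmem

theorem mem_adjoin_of_polarization_eq_zero (hf : polarization 0 1 f = 0) :
    f ∈ Algebra.adjoin K pairInvariantGenerators := by
  rw [← sum_weightedHomogeneousComponent bidegree f,
    finsum_eq_sum _ (weightedHomogeneousComponent_finsupp f)]
  refine sum_mem fun n _ ↦ mem_adjoin_of_isWeightedHomogeneous_of_polarization_eq_zero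
    (weightedHomogeneousComponent_isWeightedHomogeneous n f) ?_
  rw [← weightedHomogeneousComponent_polarization, hf, map_zero]

end CharZero

section Shear

variable {R : Type*} [CommRing R] {ι : Type*}

def shear (α : R) (a : ι × Fin 2 → R) : ι × Fin 2 → R :=
  fun p ↦ if p.2 = 0 then a (p.1, 0) + α * a (p.1, 1) else a p

-- `f (x_{r1} + t x_{r2}, x_{r2})` as a polynomial in `t`.
noncomputable def shearPoly :
    MvPolynomial (ι × Fin 2) R →ₐ[R] Polynomial (MvPolynomial (ι × Fin 2) R) :=
  aeval fun p ↦ if p.2 = 0 then Polynomial.C (X (p.1, 0)) + Polynomial.C (X (p.1, 1)) * Polynomial.X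
    else Polynomial.C (X p)

theorem shearPoly_X (p : ι × Fin 2) : shearPoly (X p : MvPolynomial (ι × Fin 2) R) =
    if p.2 = 0 then Polynomial.C (X (p.1, 0)) + Polynomial.C (X (p.1, 1)) * Polynomial.X
    else Polynomial.C (X p) :=
  aeval_X _ p

theorem eval_eval_shearPoly (α : R) (a : ι × Fin 2 → R) (f : MvPolynomial (ι × Fin 2) R) :
    eval a ((shearPoly f).eval (C α)) = eval (shear α a) f := by
  induction f using MvPolynomial.induction_on with
  | C c => simp [shearPoly]
  | add p q hp hq => simp [hp, hq]
  | mul_X p k hp =>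
    by_cases hk : k.2 = 0 <;> simp [hk, shear, hp, shearPoly_X, mul_comm α]

theorem shearPoly_eval_zero (f : MvPolynomial (ι × Fin 2) R) : (shearPoly f).eval 0 = f := by
  induction f using MvPolynomial.induction_on with
  | C c => simp [shearPoly]
  | add p q hp hq => simp [hp, hq]
  | mul_X p k hp =>
    simp only [map_mul, Polynomial.eval_mul, hp, shearPoly_X]
    split_ifs with hk
    · simp [← hk]
    · simp

theorem shearPoly_X_derivative_eval_zero [Fintype ι] (p : ι × Fin 2) :
    (shearPoly (X p : MvPolynomial (ι × Fin 2) R)).derivative.eval 0 = polarization 0 1 (X p) := by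
  obtain ⟨r, i⟩ := p
  rw [polarization_X, shearPoly_X]
  fin_cases i <;> simp

theorem shearPoly_derivative_eval_zero [Fintype ι] (f : MvPolynomial (ι × Fin 2) R) :
    (shearPoly f).derivative.eval 0 = polarization 0 1 f := by
  induction f using MvPolynomial.induction_on with
  | C c => simp [shearPoly]
  | add p q hp hq => simp [hp, hq]
  | mul_X p k hp =>
    simp only [map_mul, Polynomial.derivative_mul, Polynomial.eval_add, Polynomial.eval_mul, hp,
      shearPoly_eval_zero, shearPoly_X_derivative_eval_zero, Derivation.leibniz, smul_eq_mul]
    ring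

theorem shearPoly_eq_C_of_forall_eval_shear [IsDomain R] [Infinite R]
    {f : MvPolynomial (ι × Fin 2) R} (h : ∀ α a, eval (shear α a) f = eval a f) :
    shearPoly f = Polynomial.C f := by
  refine sub_eq_zero.mp (Polynomial.eq_zero_of_infinite_isRoot _ ?_)
  refine Set.infinite_of_injective_forall_mem (f := ⇑(C : R →+* MvPolynomial (ι × Fin 2) R))
    (C_injective _ R) fun α ↦ ?_
  simp only [Set.mem_ofPred_eq, Polynomial.IsRoot, Polynomial.eval_sub, Polynomial.eval_C,
    sub_eq_zero]
  exact MvPolynomial.funext fun a ↦ by rw [eval_eval_shearPoly, h]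

theorem polarization_eq_zero_of_forall_eval_shear [IsDomain R] [Infinite R] [Fintype ι]
    {f : MvPolynomial (ι × Fin 2) R} (h : ∀ α a, eval (shear α a) f = eval a f) :
    polarization 0 1 f = 0 := by
  rw [← shearPoly_derivative_eval_zero, shearPoly_eq_C_of_forall_eval_shear h,
    Polynomial.derivative_C, Polynomial.eval_zero]

theorem eval_shear_of_mem_adjoin [LinearOrder ι] {f : MvPolynomial (ι × Fin 2) R}
    (hf : f ∈ Algebra.adjoin R pairInvariantGenerators) (α : R) (a : ι × Fin 2 → R) :
    eval (shear α a) f = eval a f := by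
  induction hf using Algebra.adjoin_induction with
  | mem g hg =>
    rcases hg with ⟨r, rfl⟩ | ⟨r, s, -, rfl⟩
    · simp [shear]
    · simp only [minor, Fin.isValue, map_sub, map_mul, eval_X, shear, ↓reduceIte, one_ne_zero]
      ring
  | algebraMap c => simp
  | add g h _ _ hg hh => simp [hg, hh]
  | mul g h _ _ hg hh => simp [hg, hh]

end Shear

end MvPolynomial

open MvPolynomial

/-- For `V = ℂ²` and `G` the group of unipotent upper-triangular matrices `[[1,α],[0,1]]`
acting diagonally on `Vᵐ`, a polynomial in the coordinates `x_{r,i}` (`r : Fin m`,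
`i : Fin 2`) is `G`-invariant iff it lies in the subalgebra generated by the second
coordinates `x_{r,2}` and the determinants `x_{r,1}x_{s,2} − x_{r,2}x_{s,1}` (`r < s`). -/
theorem unipotent_invariants_of_pairs (m : ℕ) (f : MvPolynomial (Fin m × Fin 2) ℂ) :
    (∀ (α : ℂ) (a : Fin m × Fin 2 → ℂ),
      MvPolynomial.eval
        (fun p => if p.2 = 0 then a (p.1, 0) + α * a (p.1, 1) else a p) f =
      MvPolynomial.eval a f) ↔
    f ∈ Algebra.adjoin ℂ
      ((Set.range fun r : Fin m => (X (r, 1) : MvPolynomial (Fin m × Fin 2) ℂ)) ∪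
       {q | ∃ r s : Fin m, r < s ∧
          q = X (r, 0) * X (s, 1) - X (r, 1) * X (s, 0)}) :=
  ⟨fun h ↦ mem_adjoin_of_polarization_eq_zero (polarization_eq_zero_of_forall_eval_shear h),
    fun hf ↦ eval_shear_of_mem_adjoin hf⟩
end
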